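/- As f → 0, M₁(f) = a₀²·(1 − f·(2a₁/a₀ + 1/2)) + O(f²); that is, M₁(f) − a₀² + f·(2a₀a₁ + a₀²/2) is O(f²) near f = 0. -/
import Mathlib


open MeasureTheory intervalIntegral Asymptotics Filter

noncomputable def w0 (φ : ℝ → ℝ) (f x : ℝ) : ℝ :=
  ∫ s in (0:ℝ)..1, Real.exp (φ (x + s) - φ x - f * s)

noncomputable def M0 (φ : ℝ → ℝ) (f : ℝ) : ℝ := ∫ x in (0:ℝ)..1, w0 φ f x

noncomputable def w1 (φ : ℝ → ℝ) (f x : ℝ) : ℝ :=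
  ∫ s in (0:ℝ)..1, (w0 φ f (x + s)) ^ 2 * Real.exp (φ (x + s) - φ x - f * s)

noncomputable def M1 (φ : ℝ → ℝ) (f : ℝ) : ℝ := ∫ x in (0:ℝ)..1, w1 φ f x

noncomputable def vv (φ : ℝ → ℝ) (y : ℝ) : ℝ :=
  ∫ s in (0:ℝ)..1, Real.exp (φ (y + s) - φ y) * s

noncomputable def UU (φ : ℝ → ℝ) (x : ℝ) : ℝ :=
  ∫ s in (0:ℝ)..1,
    (2 * w0 φ 0 (x + s) * vv φ (x + s) + w0 φ 0 (x + s) ^ 2 * s) *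
      Real.exp (φ (x + s) - φ x)

namespace Stmt9

open Set Function

lemma abs_integral_le {g : ℝ → ℝ} {C : ℝ} (h : ∀ s ∈ Set.Ioc (0:ℝ) 1, |g s| ≤ C) :
    |∫ s in (0:ℝ)..1, g s| ≤ C := by
  have H := intervalIntegral.norm_integral_le_of_norm_le_const (a := (0:ℝ)) (b := 1)
    (C := C) (f := g) (fun x hx => by
      rw [Set.uIoc_of_le zero_le_one] at hx
      simpa [Real.norm_eq_abs] using h x hx)
  simpa [Real.norm_eq_abs] using H

lemma shift01 {g : ℝ → ℝ} (hper : ∀ u, g (u + 1) = g u) (y : ℝ) :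
    (∫ s in (0:ℝ)..1, g (y + s)) = ∫ u in (0:ℝ)..1, g u := by
  rw [intervalIntegral.integral_comp_add_left g y]
  simpa using (Function.Periodic.intervalIntegral_add_eq (f := g) (T := 1) hper y 0)

lemma fubini01 (F : ℝ → ℝ → ℝ) (hF : Continuous (Function.uncurry F)) :
    (∫ x in (0:ℝ)..1, ∫ s in (0:ℝ)..1, F x s) = ∫ s in (0:ℝ)..1, ∫ x in (0:ℝ)..1, F x s := by
  have h01 : (0:ℝ) ≤ 1 := zero_le_one
  have hK : IsCompact (Icc (0:ℝ) 1 ×ˢ Icc (0:ℝ) 1) := isCompact_Icc.prod isCompact_Icc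
  have hint : Integrable (Function.uncurry F)
      ((volume.restrict (Ioc (0:ℝ) 1)).prod (volume.restrict (Ioc (0:ℝ) 1))) := by
    rw [Measure.prod_restrict]
    have h1 : IntegrableOn (Function.uncurry F) (Icc (0:ℝ) 1 ×ˢ Icc (0:ℝ) 1) volume :=
      hF.continuousOn.integrableOn_compact hK
    exact h1.mono_set (Set.prod_mono Ioc_subset_Icc_self Ioc_subset_Icc_self)
  have h := MeasureTheory.integral_integral_swap hint
  simp only [intervalIntegral.integral_of_le h01]
  exact h

variable {φ : ℝ → ℝ}

lemma w0_cont (hφc : Continuous φ) (f : ℝ) : Continuous (w0 φ f) := by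
  have h : Continuous (Function.uncurry fun x s => Real.exp (φ (x + s) - φ x - f * s)) := by
    fun_prop
  exact intervalIntegral.continuous_parametric_intervalIntegral_of_continuous' h 0 1

lemma vv_cont (hφc : Continuous φ) : Continuous (vv φ) := by
  have h : Continuous (Function.uncurry fun y s => Real.exp (φ (y + s) - φ y) * s) := by
    fun_prop
  exact intervalIntegral.continuous_parametric_intervalIntegral_of_continuous' h 0 1

lemma w1_cont (hφc : Continuous φ) (f : ℝ) : Continuous (w1 φ f) := by
  have h0 := w0_cont hφc f
  have h : Continuous (Function.uncurry fun x s =>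
      (w0 φ f (x + s)) ^ 2 * Real.exp (φ (x + s) - φ x - f * s)) := by fun_prop
  exact intervalIntegral.continuous_parametric_intervalIntegral_of_continuous' h 0 1

lemma UU_cont (hφc : Continuous φ) : Continuous (UU φ) := by
  have h0 := w0_cont hφc 0
  have hv := vv_cont hφc
  have h : Continuous (Function.uncurry fun x s =>
      (2 * w0 φ 0 (x + s) * vv φ (x + s) + w0 φ 0 (x + s) ^ 2 * s) *
        Real.exp (φ (x + s) - φ x)) := by fun_prop
  exact intervalIntegral.continuous_parametric_intervalIntegral_of_continuous' h 0 1

variable {m : ℝ}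

lemma b_bd (hm : ∀ x, |φ x| ≤ m) (y : ℝ) : |w0 φ 0 y| ≤ Real.exp (2 * m) := by
  apply abs_integral_le
  intro s hs
  rw [Real.abs_exp, Real.exp_le_exp]
  have h1 := abs_le.1 (hm (y + s)); have h2 := abs_le.1 (hm y)
  nlinarith [hs.1.le, hs.2]

lemma a_bd (hm : ∀ x, |φ x| ≤ m) {f : ℝ} (hf : |f| ≤ 1) (y : ℝ) :
    |w0 φ f y| ≤ Real.exp (2 * m + 1) := by
  apply abs_integral_le
  intro s hs
  rw [Real.abs_exp, Real.exp_le_exp]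
  have h1 := abs_le.1 (hm (y + s)); have h2 := abs_le.1 (hm y)
  have h3 : -(f * s) ≤ |f * s| := neg_le_abs _
  have h4 : |f * s| ≤ 1 := by
    rw [abs_mul]
    calc |f| * |s| ≤ 1 * 1 := by
          apply mul_le_mul hf _ (abs_nonneg _) zero_le_one
          rw [abs_of_pos hs.1]; exact hs.2
      _ = 1 := one_mul 1
  linarith

lemma v_bd (hm : ∀ x, |φ x| ≤ m) (y : ℝ) : |vv φ y| ≤ Real.exp (2 * m) := by
  apply abs_integral_le
  intro s hs
  rw [abs_mul, Real.abs_exp]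
  calc Real.exp (φ (y + s) - φ y) * |s| ≤ Real.exp (2 * m) * 1 := by
        apply mul_le_mul _ _ (abs_nonneg _) (Real.exp_nonneg _)
        · rw [Real.exp_le_exp]
          have h1 := abs_le.1 (hm (y + s)); have h2 := abs_le.1 (hm y); linarith
        · rw [abs_of_pos hs.1]; exact hs.2
    _ = Real.exp (2 * m) := mul_one _

lemma step1 (hφc : Continuous φ) (hm : ∀ x, |φ x| ≤ m) {f : ℝ} (hf : |f| ≤ 1) (y : ℝ) :
    |w0 φ f y - w0 φ 0 y + f * vv φ y| ≤ Real.exp (2 * m) * f ^ 2 := by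
  have i1 : IntervalIntegrable (fun s => Real.exp (φ (y + s) - φ y - f * s)) volume 0 1 :=
    (by fun_prop : Continuous fun s => Real.exp (φ (y + s) - φ y - f * s)).intervalIntegrable 0 1
  have i2 : IntervalIntegrable (fun s => Real.exp (φ (y + s) - φ y - 0 * s)) volume 0 1 :=
    (by fun_prop : Continuous fun s => Real.exp (φ (y + s) - φ y - 0 * s)).intervalIntegrable 0 1
  have i3 : IntervalIntegrable (fun s => f * (Real.exp (φ (y + s) - φ y) * s)) volume 0 1 :=
    (by fun_prop : Continuous fun s => f * (Real.exp (φ (y + s) - φ y) * s)).intervalIntegrable 0 1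
  have key : w0 φ f y - w0 φ 0 y + f * vv φ y =
      ∫ s in (0:ℝ)..1, Real.exp (φ (y + s) - φ y) *
        (Real.exp (-(f * s)) - 1 - (-(f * s))) := by
    unfold w0 vv
    rw [← intervalIntegral.integral_const_mul, ← intervalIntegral.integral_sub i1 i2,
      ← intervalIntegral.integral_add (i1.sub i2) i3]
    congr 1
    funext s
    have e1 : φ (y + s) - φ y - f * s = (φ (y + s) - φ y) + (-(f * s)) := by ring
    rw [e1, Real.exp_add]
    simp only [zero_mul, sub_zero]
    ring
  rw [key]
  apply abs_integral_le
  intro s hs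
  rw [abs_mul, Real.abs_exp]
  have hfs : |(-(f * s))| ≤ 1 := by
    rw [abs_neg, abs_mul]
    calc |f| * |s| ≤ 1 * 1 := by
          apply mul_le_mul hf _ (abs_nonneg _) zero_le_one
          rw [abs_of_pos hs.1]; exact hs.2
      _ = 1 := one_mul 1
  have h2 : |Real.exp (-(f * s)) - 1 - -(f * s)| ≤ f ^ 2 := by
    calc |Real.exp (-(f * s)) - 1 - -(f * s)| ≤ (-(f * s)) ^ 2 :=
          Real.abs_exp_sub_one_sub_id_le hfs
      _ = f ^ 2 * s ^ 2 := by ring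
      _ ≤ f ^ 2 * 1 := by
          refine mul_le_mul_of_nonneg_left ?_ (sq_nonneg f)
          nlinarith [hs.1.le, hs.2]
      _ = f ^ 2 := mul_one _
  have h3 : Real.exp (φ (y + s) - φ y) ≤ Real.exp (2 * m) := by
    rw [Real.exp_le_exp]
    have h1 := abs_le.1 (hm (y + s)); have h2 := abs_le.1 (hm y); linarith
  exact mul_le_mul h3 h2 (abs_nonneg _) (Real.exp_nonneg _)

lemma phi_bd (hφc : Continuous φ) (hφper : ∀ x, φ (x + 1) = φ x) :
    ∃ m : ℝ, 0 ≤ m ∧ ∀ x, |φ x| ≤ m := by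
  have hper : Function.Periodic φ 1 := hφper
  have hbd := hper.isBounded_of_continuous one_ne_zero hφc
  rw [isBounded_iff_forall_norm_le] at hbd
  obtain ⟨C, hC⟩ := hbd
  exact ⟨max C 0, le_max_right _ _, fun x =>
    le_trans (by simpa [Real.norm_eq_abs] using hC (φ x) (Set.mem_range_self x)) (le_max_left _ _)⟩

/-- The main estimate. -/
lemma main_est (hφc : Continuous φ) (hφper : ∀ x, φ (x + 1) = φ x) :
    ∃ K : ℝ, ∀ f : ℝ, |f| ≤ 1 →
      |M1 φ f - M1 φ 0 + f * ∫ x in (0:ℝ)..1, UU φ x| ≤ K * f ^ 2 := by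
  obtain ⟨m, hm0, hm⟩ := phi_bd hφc hφper
  set B : ℝ := Real.exp (2 * m + 1) with hBdef
  have hB1 : 1 ≤ B := Real.one_le_exp (by linarith)
  have hB0 : 0 ≤ B := by linarith
  have hE2B : Real.exp (2 * m) ≤ B := Real.exp_le_exp.2 (by linarith)
  have hbB : ∀ y, |w0 φ 0 y| ≤ B := fun y => (b_bd hm y).trans hE2B
  have hvB : ∀ y, |vv φ y| ≤ B := fun y => (v_bd hm y).trans hE2B
  have haB : ∀ {f : ℝ}, |f| ≤ 1 → ∀ y, |w0 φ f y| ≤ B := fun hf y => a_bd hm hf y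
  have hs1 : ∀ {f : ℝ}, |f| ≤ 1 → ∀ y,
      |w0 φ f y - w0 φ 0 y + f * vv φ y| ≤ B * f ^ 2 := fun {f} hf y =>
    (step1 hφc hm hf y).trans (mul_le_mul_of_nonneg_right hE2B (sq_nonneg f))
  have hexpB : ∀ x y : ℝ, Real.exp (φ y - φ x) ≤ B := fun x y => by
    refine (Real.exp_le_exp.2 ?_).trans hE2B
    have h1 := abs_le.1 (hm x); have h2 := abs_le.1 (hm y); linarith
  refine ⟨9 * B ^ 3, fun f hf => ?_⟩
  have hf2 : f ^ 2 ≤ |f| := by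
    nlinarith [sq_abs f, abs_nonneg f]
  -- step 2: expansion of w0^2
  have hstep2 : ∀ y, |w0 φ f y ^ 2 - w0 φ 0 y ^ 2 + f * (2 * w0 φ 0 y * vv φ y)| ≤
      4 * B ^ 2 * f ^ 2 := by
    intro y
    set a := w0 φ f y; set b := w0 φ 0 y; set v := vv φ y
    have hid : a ^ 2 - b ^ 2 + f * (2 * b * v) =
        (a - b + f * v) * (a + b - f * v) + f ^ 2 * v ^ 2 := by ring
    rw [hid]
    have h1 : |a - b + f * v| ≤ B * f ^ 2 := hs1 hf y
    have h2 : |a + b - f * v| ≤ 3 * B := by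
      calc |a + b - f * v| ≤ |a + b| + |f * v| := abs_sub _ _
        _ ≤ |a| + |b| + |f| * |v| := by rw [abs_mul]; exact add_le_add (abs_add_le _ _) le_rfl
        _ ≤ B + B + 1 * B := by
            refine add_le_add (add_le_add (haB hf y) (hbB y)) ?_
            exact mul_le_mul hf (hvB y) (abs_nonneg _) zero_le_one
        _ = 3 * B := by ring
    have h3 : |f ^ 2 * v ^ 2| ≤ f ^ 2 * B ^ 2 := by
      rw [abs_mul, abs_of_nonneg (sq_nonneg f), abs_of_nonneg (sq_nonneg v)]
      refine mul_le_mul_of_nonneg_left ?_ (sq_nonneg f)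
      rw [← sq_abs]; exact pow_le_pow_left₀ (abs_nonneg _) (hvB y) 2
    calc |(a - b + f * v) * (a + b - f * v) + f ^ 2 * v ^ 2|
        ≤ |(a - b + f * v)| * |(a + b - f * v)| + |f ^ 2 * v ^ 2| := by
          rw [← abs_mul]; exact abs_add_le _ _
      _ ≤ (B * f ^ 2) * (3 * B) + f ^ 2 * B ^ 2 :=
          add_le_add (mul_le_mul h1 h2 (abs_nonneg _) (by positivity)) h3
      _ = 4 * B ^ 2 * f ^ 2 := by ring
  -- preliminary: |a - b| small
  have hab : ∀ y, |w0 φ f y - w0 φ 0 y| ≤ 2 * B * |f| := by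
    intro y
    have h1 := hs1 hf y
    have h2 : |f * vv φ y| ≤ |f| * B := by
      rw [abs_mul]; exact mul_le_mul_of_nonneg_left (hvB y) (abs_nonneg f)
    calc |w0 φ f y - w0 φ 0 y| = |(w0 φ f y - w0 φ 0 y + f * vv φ y) - f * vv φ y| := by
          ring_nf
      _ ≤ |w0 φ f y - w0 φ 0 y + f * vv φ y| + |f * vv φ y| := abs_sub _ _
      _ ≤ B * f ^ 2 + |f| * B := add_le_add h1 h2
      _ ≤ B * |f| + |f| * B := by
          refine add_le_add (mul_le_mul_of_nonneg_left hf2 hB0) le_rfl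
      _ = 2 * B * |f| := by ring
  -- step 3 pointwise
  have hstep3p : ∀ x : ℝ, ∀ s ∈ Set.Ioc (0:ℝ) 1,
      |w0 φ f (x + s) ^ 2 * Real.exp (φ (x + s) - φ x - f * s)
        - w0 φ 0 (x + s) ^ 2 * Real.exp (φ (x + s) - φ x - 0 * s)
        + f * ((2 * w0 φ 0 (x + s) * vv φ (x + s) + w0 φ 0 (x + s) ^ 2 * s) *
            Real.exp (φ (x + s) - φ x))| ≤ 9 * B ^ 3 * f ^ 2 := by
    intro x s hs
    set a := w0 φ f (x + s); set b := w0 φ 0 (x + s); set v := vv φ (x + s)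
    set ρ : ℝ := Real.exp (-(f * s)) - 1 + f * s with hρdef
    have hsle : |s| ≤ 1 := by rw [abs_of_pos hs.1]; exact hs.2
    have hfs : |(-(f * s))| ≤ 1 := by
      rw [abs_neg, abs_mul]
      calc |f| * |s| ≤ 1 * 1 := mul_le_mul hf hsle (abs_nonneg _) zero_le_one
        _ = 1 := one_mul 1
    have hρ : |ρ| ≤ f ^ 2 := by
      rw [hρdef]
      calc |Real.exp (-(f * s)) - 1 + f * s| = |Real.exp (-(f * s)) - 1 - -(f * s)| := by
            ring_nf
        _ ≤ (-(f * s)) ^ 2 := Real.abs_exp_sub_one_sub_id_le hfs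
        _ = f ^ 2 * s ^ 2 := by ring
        _ ≤ f ^ 2 * 1 := by
            refine mul_le_mul_of_nonneg_left ?_ (sq_nonneg f)
            nlinarith [hs.1.le, hs.2]
        _ = f ^ 2 := mul_one _
    have hL : w0 φ f (x + s) ^ 2 * Real.exp (φ (x + s) - φ x - f * s)
        - w0 φ 0 (x + s) ^ 2 * Real.exp (φ (x + s) - φ x - 0 * s)
        + f * ((2 * w0 φ 0 (x + s) * vv φ (x + s) + w0 φ 0 (x + s) ^ 2 * s) *
            Real.exp (φ (x + s) - φ x)) =
        Real.exp (φ (x + s) - φ x) *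
          ((a ^ 2 - b ^ 2 + f * (2 * b * v)) + f * s * (b ^ 2 - a ^ 2) + a ^ 2 * ρ) := by
      have e1 : Real.exp (φ (x + s) - φ x - f * s) =
          Real.exp (φ (x + s) - φ x) * Real.exp (-(f * s)) := by
        rw [← Real.exp_add]; ring_nf
      have e2 : φ (x + s) - φ x - 0 * s = φ (x + s) - φ x := by ring
      rw [e1, e2, hρdef]
      ring
    rw [hL, abs_mul, Real.abs_exp]
    have hinner : |(a ^ 2 - b ^ 2 + f * (2 * b * v)) + f * s * (b ^ 2 - a ^ 2) + a ^ 2 * ρ| ≤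
        9 * B ^ 2 * f ^ 2 := by
      have h1 := hstep2 (x + s)
      have h2 : |f * s * (b ^ 2 - a ^ 2)| ≤ 4 * B ^ 2 * f ^ 2 := by
        rw [abs_mul, abs_mul]
        have hba : |b ^ 2 - a ^ 2| ≤ 2 * B * |f| * (2 * B) := by
          have hd : b ^ 2 - a ^ 2 = (b - a) * (b + a) := by ring
          rw [hd, abs_mul]
          refine mul_le_mul ?_ ?_ (abs_nonneg _) (by positivity)
          · rw [abs_sub_comm]; exact hab (x + s)
          · calc |b + a| ≤ |b| + |a| := abs_add_le _ _
              _ ≤ B + B := add_le_add (hbB (x + s)) (haB hf (x + s))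
              _ = 2 * B := by ring
        calc |f| * |s| * |b ^ 2 - a ^ 2| ≤ |f| * 1 * (2 * B * |f| * (2 * B)) := by
              refine mul_le_mul (mul_le_mul le_rfl hsle (abs_nonneg _) (abs_nonneg _)) hba
                (abs_nonneg _) (by positivity)
          _ = 4 * B ^ 2 * (|f| * |f|) := by ring
          _ = 4 * B ^ 2 * f ^ 2 := by rw [abs_mul_abs_self, ← sq]
      have h3 : |a ^ 2 * ρ| ≤ B ^ 2 * f ^ 2 := by
        rw [abs_mul, abs_of_nonneg (sq_nonneg a)]
        refine mul_le_mul ?_ hρ (abs_nonneg _) (by positivity)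
        rw [← sq_abs]; exact pow_le_pow_left₀ (abs_nonneg _) (haB hf (x + s)) 2
      calc |(a ^ 2 - b ^ 2 + f * (2 * b * v)) + f * s * (b ^ 2 - a ^ 2) + a ^ 2 * ρ|
          ≤ |a ^ 2 - b ^ 2 + f * (2 * b * v)| + |f * s * (b ^ 2 - a ^ 2)| + |a ^ 2 * ρ| :=
            abs_add_three _ _ _
        _ ≤ 4 * B ^ 2 * f ^ 2 + 4 * B ^ 2 * f ^ 2 + B ^ 2 * f ^ 2 := by
            exact add_le_add (add_le_add h1 h2) h3
        _ = 9 * B ^ 2 * f ^ 2 := by ring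
    calc Real.exp (φ (x + s) - φ x) *
          |(a ^ 2 - b ^ 2 + f * (2 * b * v)) + f * s * (b ^ 2 - a ^ 2) + a ^ 2 * ρ|
        ≤ B * (9 * B ^ 2 * f ^ 2) :=
          mul_le_mul (hexpB x (x + s)) hinner (abs_nonneg _) hB0
      _ = 9 * B ^ 3 * f ^ 2 := by ring
  -- step 3: integrate over s
  have hstep3 : ∀ x, |w1 φ f x - w1 φ 0 x + f * UU φ x| ≤ 9 * B ^ 3 * f ^ 2 := by
    intro x
    have c0 := w0_cont hφc f
    have c00 := w0_cont hφc 0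
    have cv := vv_cont hφc
    have i1 : IntervalIntegrable
        (fun s => w0 φ f (x + s) ^ 2 * Real.exp (φ (x + s) - φ x - f * s)) volume 0 1 :=
      (by fun_prop : Continuous fun s =>
        w0 φ f (x + s) ^ 2 * Real.exp (φ (x + s) - φ x - f * s)).intervalIntegrable 0 1
    have i2 : IntervalIntegrable
        (fun s => w0 φ 0 (x + s) ^ 2 * Real.exp (φ (x + s) - φ x - 0 * s)) volume 0 1 :=
      (by fun_prop : Continuous fun s =>
        w0 φ 0 (x + s) ^ 2 * Real.exp (φ (x + s) - φ x - 0 * s)).intervalIntegrable 0 1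
    have i3 : IntervalIntegrable (fun s =>
        f * ((2 * w0 φ 0 (x + s) * vv φ (x + s) + w0 φ 0 (x + s) ^ 2 * s) *
          Real.exp (φ (x + s) - φ x))) volume 0 1 :=
      (by fun_prop : Continuous fun s =>
        f * ((2 * w0 φ 0 (x + s) * vv φ (x + s) + w0 φ 0 (x + s) ^ 2 * s) *
          Real.exp (φ (x + s) - φ x))).intervalIntegrable 0 1
    have key : w1 φ f x - w1 φ 0 x + f * UU φ x =
        ∫ s in (0:ℝ)..1,
          (w0 φ f (x + s) ^ 2 * Real.exp (φ (x + s) - φ x - f * s)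
            - w0 φ 0 (x + s) ^ 2 * Real.exp (φ (x + s) - φ x - 0 * s)
            + f * ((2 * w0 φ 0 (x + s) * vv φ (x + s) + w0 φ 0 (x + s) ^ 2 * s) *
                Real.exp (φ (x + s) - φ x))) := by
      unfold w1 UU
      rw [← intervalIntegral.integral_const_mul, ← intervalIntegral.integral_sub i1 i2,
        ← intervalIntegral.integral_add (i1.sub i2) i3]
    rw [key]
    exact abs_integral_le (fun s hs => hstep3p x s hs)
  -- step 4: integrate over x
  have c1 := w1_cont hφc f
  have c10 := w1_cont hφc 0
  have cU := UU_cont hφc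
  have j1 : IntervalIntegrable (w1 φ f) volume 0 1 := c1.intervalIntegrable 0 1
  have j2 : IntervalIntegrable (w1 φ 0) volume 0 1 := c10.intervalIntegrable 0 1
  have j3 : IntervalIntegrable (fun x => f * UU φ x) volume 0 1 :=
    (continuous_const.mul cU).intervalIntegrable 0 1
  have key4 : M1 φ f - M1 φ 0 + f * ∫ x in (0:ℝ)..1, UU φ x =
      ∫ x in (0:ℝ)..1, (w1 φ f x - w1 φ 0 x + f * UU φ x) := by
    unfold M1
    rw [← intervalIntegral.integral_const_mul, ← intervalIntegral.integral_sub j1 j2,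
      ← intervalIntegral.integral_add (j1.sub j2) j3]
  rw [key4]
  exact abs_integral_le (fun x _ => hstep3 x)

lemma vv_per (hφper : ∀ x, φ (x + 1) = φ x) (y : ℝ) : vv φ (y + 1) = vv φ y := by
  unfold vv
  have h1 : ∀ s : ℝ, φ (y + 1 + s) = φ (y + s) := fun s => by
    rw [show y + 1 + s = (y + s) + 1 by ring, hφper]
  simp_rw [h1, hφper]

lemma id_b (hφper : ∀ x, φ (x + 1) = φ x) (y : ℝ) :
    w0 φ 0 y = Real.exp (-φ y) * ∫ u in (0:ℝ)..1, Real.exp (φ u) := by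
  unfold w0
  have h : ∀ s : ℝ, Real.exp (φ (y + s) - φ y - 0 * s) =
      Real.exp (-φ y) * Real.exp (φ (y + s)) := by
    intro s; rw [← Real.exp_add]; ring_nf
  simp_rw [h]
  rw [intervalIntegral.integral_const_mul]
  congr 1
  exact shift01 (g := fun u => Real.exp (φ u)) (fun u => by simp [hφper]) y

lemma id_w10 (hφper : ∀ x, φ (x + 1) = φ x) (x : ℝ) :
    w1 φ 0 x = ((∫ u in (0:ℝ)..1, Real.exp (φ u)) ^ 2 *
      ∫ u in (0:ℝ)..1, Real.exp (-φ u)) * Real.exp (-φ x) := by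
  set C := ∫ u in (0:ℝ)..1, Real.exp (φ u) with hC
  unfold w1
  have h : ∀ s : ℝ, (w0 φ 0 (x + s)) ^ 2 * Real.exp (φ (x + s) - φ x - 0 * s) =
      (C ^ 2 * Real.exp (-φ x)) * Real.exp (-φ (x + s)) := by
    intro s
    rw [id_b hφper (x + s)]
    calc (Real.exp (-φ (x + s)) * C) ^ 2 * Real.exp (φ (x + s) - φ x - 0 * s)
        = C ^ 2 * (Real.exp (-φ (x + s)) * Real.exp (-φ (x + s)) *
            Real.exp (φ (x + s) - φ x - 0 * s)) := by ring
      _ = C ^ 2 * Real.exp (-φ (x + s) + -φ (x + s) + (φ (x + s) - φ x - 0 * s)) := by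
          rw [← Real.exp_add, ← Real.exp_add]
      _ = (C ^ 2 * Real.exp (-φ x)) * Real.exp (-φ (x + s)) := by
          rw [show -φ (x + s) + -φ (x + s) + (φ (x + s) - φ x - 0 * s) =
            (-φ x) + (-φ (x + s)) by ring, Real.exp_add]
          ring
  simp_rw [h]
  rw [intervalIntegral.integral_const_mul,
    shift01 (g := fun u => Real.exp (-φ u)) (fun u => by simp [hφper]) x]
  ring

lemma id_M10 (hφper : ∀ x, φ (x + 1) = φ x) :
    M1 φ 0 = ((∫ u in (0:ℝ)..1, Real.exp (-φ u)) * ∫ u in (0:ℝ)..1, Real.exp (φ u)) ^ 2 := by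
  unfold M1
  simp_rw [id_w10 hφper]
  rw [intervalIntegral.integral_const_mul]
  ring

lemma id_T (hφc : Continuous φ) (hφper : ∀ x, φ (x + 1) = φ x) :
    (∫ x in (0:ℝ)..1, Real.exp (-φ x) * ∫ s in (0:ℝ)..1, Real.exp (-φ (x + s)) * s) =
      (∫ u in (0:ℝ)..1, Real.exp (-φ u)) ^ 2 / 2 := by
  set D := ∫ u in (0:ℝ)..1, Real.exp (-φ u) with hD
  set k : ℝ → ℝ := fun s => ∫ x in (0:ℝ)..1, Real.exp (-φ x - φ (x + s)) with hk
  have hkcont : Continuous k := by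
    have h : Continuous (Function.uncurry fun s x => Real.exp (-φ x - φ (x + s))) := by fun_prop
    exact intervalIntegral.continuous_parametric_intervalIntegral_of_continuous' h 0 1
  have hLHS : (∫ x in (0:ℝ)..1, Real.exp (-φ x) * ∫ s in (0:ℝ)..1, Real.exp (-φ (x + s)) * s) =
      ∫ s in (0:ℝ)..1, k s * s := by
    have h1 : ∀ x : ℝ, Real.exp (-φ x) * ∫ s in (0:ℝ)..1, Real.exp (-φ (x + s)) * s =
        ∫ s in (0:ℝ)..1, Real.exp (-φ x - φ (x + s)) * s := by
      intro x
      rw [← intervalIntegral.integral_const_mul]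
      congr 1; funext s
      rw [← mul_assoc, ← Real.exp_add]; ring_nf
    simp_rw [h1]
    rw [fubini01 (fun x s => Real.exp (-φ x - φ (x + s)) * s) (by fun_prop)]
    congr 1; funext s
    rw [hk, ← intervalIntegral.integral_mul_const]
  have hksymm : ∀ s : ℝ, k (1 - s) = k s := by
    intro s
    set g : ℝ → ℝ := fun u => Real.exp (-φ (u + s) - φ u) with hg
    have hgper : ∀ u, g (u + 1) = g u := by
      intro u
      simp only [g]
      rw [show u + 1 + s = (u + s) + 1 by ring, hφper, hφper]
    have h1 : ∀ x : ℝ, Real.exp (-φ x - φ (x + (1 - s))) = g (x + -s) := by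
      intro x
      simp only [g]
      rw [show x + -s + s = x by ring,
        show x + (1 - s) = (x + -s) + 1 by ring, hφper]
    have h2 : k (1 - s) = ∫ x in (0:ℝ)..1, g (x + -s) := by
      rw [hk]; exact intervalIntegral.integral_congr (fun x _ => h1 x)
    rw [h2, intervalIntegral.integral_comp_add_right g (-s)]
    have h3 : (∫ u in (0:ℝ) + -s..(1:ℝ) + -s, g u) = ∫ u in (0:ℝ)..1, g u := by
      have := Function.Periodic.intervalIntegral_add_eq (f := g) (T := 1) hgper (-s) 0
      simpa [show (0:ℝ) + -s = -s by ring, show (1:ℝ) + -s = -s + 1 by ring] using this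
    rw [h3, hk]
    apply intervalIntegral.integral_congr
    intro u _
    simp only [g]
    rw [show -φ (u + s) - φ u = -φ u - φ (u + s) by ring]
  have hsym2 : (∫ s in (0:ℝ)..1, k s * s) = ∫ s in (0:ℝ)..1, k s * (1 - s) := by
    have h1 : (∫ s in (0:ℝ)..1, k s * (1 - s)) =
        ∫ s in (0:ℝ)..1, (fun t => k t * t) (1 - s) := by
      apply intervalIntegral.integral_congr
      intro s _
      simp only
      rw [hksymm s]
    rw [h1]
    have h2 := intervalIntegral.integral_comp_sub_left (a := (0:ℝ)) (b := 1)
      (fun t => k t * t) 1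
    simp only [sub_zero, sub_self] at h2
    rw [h2]
  have hki : IntervalIntegrable (fun s => k s * s) volume 0 1 :=
    (hkcont.mul continuous_id).intervalIntegrable 0 1
  have hki2 : IntervalIntegrable (fun s => k s * (1 - s)) volume 0 1 :=
    (hkcont.mul (by fun_prop)).intervalIntegrable 0 1
  have hkD : (∫ s in (0:ℝ)..1, k s) = D ^ 2 := by
    rw [hk]
    rw [← fubini01 (fun x s => Real.exp (-φ x - φ (x + s))) (by fun_prop)]
    have h1 : ∀ x : ℝ, (∫ s in (0:ℝ)..1, Real.exp (-φ x - φ (x + s))) =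
        Real.exp (-φ x) * D := by
      intro x
      have hpt : ∀ s : ℝ, Real.exp (-φ x - φ (x + s)) =
          Real.exp (-φ x) * Real.exp (-φ (x + s)) := by
        intro s; rw [← Real.exp_add]; ring_nf
      simp_rw [hpt]
      rw [intervalIntegral.integral_const_mul,
        shift01 (g := fun u => Real.exp (-φ u)) (fun u => by simp [hφper]) x]
    simp_rw [h1]
    rw [intervalIntegral.integral_mul_const]
    rw [hD]; ring
  have h2T : 2 * (∫ s in (0:ℝ)..1, k s * s) = ∫ s in (0:ℝ)..1, k s := by
    have hadd := intervalIntegral.integral_add hki hki2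
    rw [← hsym2] at hadd
    have heq : (∫ s in (0:ℝ)..1, (k s * s + k s * (1 - s))) = ∫ s in (0:ℝ)..1, k s := by
      apply intervalIntegral.integral_congr
      intro s _; ring
    linarith [hadd, heq]
  rw [hLHS]
  linarith [h2T, hkD]

lemma id_U (hφc : Continuous φ) (hφper : ∀ x, φ (x + 1) = φ x) :
    (∫ x in (0:ℝ)..1, UU φ x) =
      2 * ((∫ u in (0:ℝ)..1, Real.exp (-φ u)) * ∫ u in (0:ℝ)..1, Real.exp (φ u)) *
          (∫ x in (0:ℝ)..1, vv φ x) +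
        ((∫ u in (0:ℝ)..1, Real.exp (-φ u)) * ∫ u in (0:ℝ)..1, Real.exp (φ u)) ^ 2 / 2 := by
  set C := ∫ u in (0:ℝ)..1, Real.exp (φ u) with hC
  set D := ∫ u in (0:ℝ)..1, Real.exp (-φ u) with hD
  set A1 := ∫ x in (0:ℝ)..1, vv φ x with hA1
  have cv := vv_cont hφc
  have hUx : ∀ x : ℝ, UU φ x = (2 * C * A1) * Real.exp (-φ x) +
      C ^ 2 * (Real.exp (-φ x) * ∫ s in (0:ℝ)..1, Real.exp (-φ (x + s)) * s) := by
    intro x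
    unfold UU
    have hpt : ∀ s : ℝ,
        (2 * w0 φ 0 (x + s) * vv φ (x + s) + w0 φ 0 (x + s) ^ 2 * s) *
          Real.exp (φ (x + s) - φ x) =
        (2 * C * Real.exp (-φ x)) * vv φ (x + s) +
          (C ^ 2 * Real.exp (-φ x)) * (Real.exp (-φ (x + s)) * s) := by
      intro s
      rw [id_b hφper (x + s)]
      have r1 : Real.exp (-φ (x + s)) * Real.exp (φ (x + s) - φ x) = Real.exp (-φ x) := by
        rw [← Real.exp_add]; ring_nf
      linear_combination (2 * C * vv φ (x + s) + C ^ 2 * s * Real.exp (-φ (x + s))) * r1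
    simp_rw [hpt]
    have i1 : IntervalIntegrable
        (fun s => (2 * C * Real.exp (-φ x)) * vv φ (x + s)) volume 0 1 :=
      (by fun_prop : Continuous fun s =>
        (2 * C * Real.exp (-φ x)) * vv φ (x + s)).intervalIntegrable 0 1
    have i2 : IntervalIntegrable
        (fun s => (C ^ 2 * Real.exp (-φ x)) * (Real.exp (-φ (x + s)) * s)) volume 0 1 :=
      (by fun_prop : Continuous fun s =>
        (C ^ 2 * Real.exp (-φ x)) * (Real.exp (-φ (x + s)) * s)).intervalIntegrable 0 1
    rw [intervalIntegral.integral_add i1 i2, intervalIntegral.integral_const_mul,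
      intervalIntegral.integral_const_mul,
      shift01 (g := vv φ) (fun u => vv_per hφper u) x]
    ring
  simp_rw [hUx]
  have j1 : IntervalIntegrable (fun x => (2 * C * A1) * Real.exp (-φ x)) volume 0 1 :=
    (by fun_prop : Continuous fun x => (2 * C * A1) * Real.exp (-φ x)).intervalIntegrable 0 1
  have j2 : IntervalIntegrable
      (fun x => C ^ 2 * (Real.exp (-φ x) * ∫ s in (0:ℝ)..1, Real.exp (-φ (x + s)) * s))
      volume 0 1 := by
    have hq : Continuous (fun x => ∫ s in (0:ℝ)..1, Real.exp (-φ (x + s)) * s) := by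
      have h : Continuous (Function.uncurry fun x s => Real.exp (-φ (x + s)) * s) := by fun_prop
      exact intervalIntegral.continuous_parametric_intervalIntegral_of_continuous' h 0 1
    exact (continuous_const.mul ((by fun_prop : Continuous fun x =>
      Real.exp (-φ x)).mul hq)).intervalIntegrable 0 1
  rw [intervalIntegral.integral_add j1 j2, intervalIntegral.integral_const_mul,
    intervalIntegral.integral_const_mul, id_T hφc hφper]
  ring

end Stmt9

/-- As `f → 0`, `M₁(f) = a₀²·(1 − f·(2a₁/a₀ + 1/2)) + O(f²)`. -/
theorem stmt_9 (φ : ℝ → ℝ) (hφc : Continuous φ) (hφper : ∀ x, φ (x + 1) = φ x)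
    (a0 a1 : ℝ)
    (ha0 : a0 = (∫ x in (0:ℝ)..1, Real.exp (-φ x)) * ∫ s in (0:ℝ)..1, Real.exp (φ s))
    (ha1 : a1 = ∫ x in (0:ℝ)..1, ∫ s in (0:ℝ)..1, Real.exp (φ (x + s) - φ x) * s) :
    (fun f => M1 φ f - a0 ^ 2 + f * (2 * a0 * a1 + a0 ^ 2 / 2)) =O[nhds 0]
      (fun f => f ^ 2) := by
  obtain ⟨K, hK⟩ := Stmt9.main_est hφc hφper
  rw [Asymptotics.isBigO_iff]
  refine ⟨K, ?_⟩
  have hM10 : M1 φ 0 = a0 ^ 2 := by rw [ha0]; exact Stmt9.id_M10 hφper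
  have hvv : a1 = ∫ x in (0:ℝ)..1, vv φ x := by rw [ha1]; rfl
  have hU2 : (∫ x in (0:ℝ)..1, UU φ x) = 2 * a0 * a1 + a0 ^ 2 / 2 := by
    rw [Stmt9.id_U hφc hφper, ha0, hvv]
  filter_upwards [Metric.closedBall_mem_nhds (0:ℝ) one_pos] with f hf
  have hf1 : |f| ≤ 1 := by simpa [Real.dist_eq] using hf
  have h := hK f hf1
  rw [hM10, hU2] at h
  simpa [Real.norm_eq_abs, abs_of_nonneg (sq_nonneg f)] using h
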